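/- Let r ≥ 2, let (n,χ) be an l-coloring of the edges of the complete graph on [n], let v ∈ [n], let A ⊆ [n] with v < A (v less than every element of A), and let B be obtained from A by deleting the first l(r-2)+1 and the last l(r-2)+1 elements. If the edges {v,w}, w ∈ B, do not all have the same color, then (n,χ) contains an r-rich coloring. -/

import Mathlib

/-- A (directed representation of an) edge: a pair of vertices `p` with `p.1 < p.2`. -/
abbrev Edge (n : ℕ) := {p : Fin n × Fin n // p.1 < p.2}

/-- An edge-`C`-colored complete graph: a number of vertices together with a coloring
of all edges by elements of `C`. -/
abbrev Coloring (C : Type) := (n : ℕ) × (Edge n → C)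

/-- Build an edge from natural numbers `i < j < n`. -/
def mkE {n : ℕ} (i j : ℕ) (hij : i < j) (hj : j < n) : Edge n :=
  ⟨(⟨i, lt_trans hij hj⟩, ⟨j, hj⟩), Fin.mk_lt_mk.mpr hij⟩

/-- The image of an edge under a strictly increasing vertex map. -/
def edgeMap {a b : ℕ} (f : Fin a → Fin b) (hf : StrictMono f) (e : Edge a) : Edge b :=
  ⟨(f e.1.1, f e.1.2), hf e.2⟩

/-- Containment of colorings: `K ⪯ L` via a strictly increasing vertex map that sends
the color of each edge to a `le`-larger color. -/
def ColLe {C : Type} (le : C → C → Prop) (K L : Coloring C) : Prop :=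
  ∃ f : Fin K.1 → Fin L.1, ∃ hf : StrictMono f,
    ∀ e : Edge K.1, le (K.2 e) (L.2 (edgeMap f hf e))

/-- A lower ideal of colorings. -/
def IsIdeal {C : Type} (le : C → C → Prop) (X : Set (Coloring C)) : Prop :=
  ∀ K L : Coloring C, ColLe le K L → L ∈ X → K ∈ X

/-- The reversal of an edge under the order-reversing permutation of the vertices. -/
def revE {n : ℕ} (e : Edge n) : Edge n :=
  ⟨(e.1.2.rev, e.1.1.rev), Fin.rev_lt_rev.mpr e.2⟩

/-- The reversal of a coloring. -/
def revC {n : ℕ} {C : Type} (χ : Edge n → C) : Edge n → C := fun e => χ (revE e)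

/-- A coloring on `2r-1` vertices is of type 1 (0-indexed version of:
`χ({i,i+1}) = a` for `1 ≤ i ≤ r-1` and `χ({r,r+1}) = b` for two distinct colors). -/
def Type1 {C : Type} (r : ℕ) (χ : Edge (2 * r - 1) → C) : Prop :=
  ∃ a b : C, a ≠ b ∧
    (∀ (t : ℕ) (h : t + 2 ≤ r), χ (mkE t (t + 1) (by omega) (by omega)) = a) ∧
    (∀ h : r < 2 * r - 1, χ (mkE (r - 1) r (by omega) h) = b)

/-- A coloring on `2r-1` vertices is of type 2 (0-indexed version of:
`χ({1,i}) = a` for `2 ≤ i ≤ r` and `χ({1,r+1}) = b` for two distinct colors). -/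
def Type2 {C : Type} (r : ℕ) (χ : Edge (2 * r - 1) → C) : Prop :=
  ∃ a b : C, a ≠ b ∧
    (∀ (t : ℕ) (h1 : 1 ≤ t) (h2 : t ≤ r - 1), χ (mkE 0 t (by omega) (by omega)) = a) ∧
    (∀ h : r < 2 * r - 1, χ (mkE 0 r (by omega) h) = b)

/-- An `r`-rich coloring: on `2r-1` vertices, of type 1 or type 2, in it or its reversal. -/
def Rich {C : Type} (r : ℕ) (χ : Edge (2 * r - 1) → C) : Prop :=
  Type1 r χ ∨ Type1 r (revC χ) ∨ Type2 r χ ∨ Type2 r (revC χ)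

/-- `(n,χ)` contains an `r`-rich coloring (with respect to discrete containment). -/
def ContainsRich {C : Type} {n : ℕ} (r : ℕ) (χ : Edge n → C) : Prop :=
  ∃ χ' : Edge (2 * r - 1) → C, Rich r χ' ∧
    ∃ f : Fin (2 * r - 1) → Fin n, ∃ hf : StrictMono f,
      ∀ e : Edge (2 * r - 1), χ' e = χ (edgeMap f hf e)

/-!
Let `w, w'` be vertices of `B` whose edges to `v` have different colors. Below `min w w'` there
are more than `l (r - 2)` vertices of `A`, so by pigeonhole `r - 1` of them span edges to `v` of
one color `c`. One of `w, w'`, call it `t`, sends an edge of a color other than `c` to `v`, and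
above `t` there are still at least `r - 2` vertices of `A`. The vertex `v`, the `r - 1` vertices
of color `c`, then `t`, then `r - 2` further vertices span a coloring of type 2.
-/

section Type2

variable {C : Type} {n r : ℕ}

lemma apply_edgeMap_mkE (χ : Edge n → C) {m : ℕ} {f : Fin m → Fin n} (hf : StrictMono f)
    {i j : ℕ} (hij : i < j) (hj : j < m) {x y : Fin n} (hx : f ⟨i, hij.trans hj⟩ = x)
    (hy : f ⟨j, hj⟩ = y) (hxy : x < y) :
    χ (edgeMap f hf (mkE i j hij hj)) = χ ⟨(x, y), hxy⟩ := by
  subst hx hy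
  rfl

def type2Embedding (v t : Fin n) (g : Fin (r - 1) → Fin n) (u : Fin (r - 2) → Fin n) :
    Fin (2 * r - 1) → Fin n := fun i =>
  if h₀ : (i : ℕ) = 0 then v
  else if h₁ : (i : ℕ) < r then g ⟨i - 1, by omega⟩
  else if h₂ : (i : ℕ) = r then t
  else u ⟨i - (r + 1), by have := i.isLt; omega⟩

lemma type2Embedding_strictMono {v t : Fin n} {g : Fin (r - 1) → Fin n}
    {u : Fin (r - 2) → Fin n} (hg : StrictMono g) (hu : StrictMono u) (hvg : ∀ k, v < g k)
    (hgt : ∀ k, g k < t) (htu : ∀ k, t < u k) (hvt : v < t) :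
    StrictMono (type2Embedding v t g u) := by
  intro i j hij
  have hij' : (i : ℕ) < j := hij
  unfold type2Embedding
  split_ifs <;>
    first
      | omega
      | exact hvg _
      | exact hvt
      | exact hvt.trans (htu _)
      | exact hgt _
      | exact (hgt _).trans (htu _)
      | exact htu _
      | exact hg (Fin.mk_lt_mk.mpr (by omega))
      | exact hu (Fin.mk_lt_mk.mpr (by omega))

lemma type2_comp_type2Embedding (χ : Edge n → C) {v t : Fin n} {g : Fin (r - 1) → Fin n}
    {u : Fin (r - 2) → Fin n} (hf : StrictMono (type2Embedding v t g u)) {c : C}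
    (hvg : ∀ k, v < g k) (hgc : ∀ k, χ ⟨(v, g k), hvg k⟩ = c) (hvt : v < t)
    (htc : χ ⟨(v, t), hvt⟩ ≠ c) :
    Type2 r (χ ∘ edgeMap _ hf) := by
  have hv : ∀ h, type2Embedding v t g u ⟨0, h⟩ = v := fun _ => dif_pos rfl
  refine ⟨c, χ ⟨(v, t), hvt⟩, htc.symm, fun s hs₁ hs₂ => ?_, fun hr => ?_⟩
  · have hs : type2Embedding v t g u ⟨s, by omega⟩ = g ⟨s - 1, by omega⟩ := by
      simp only [type2Embedding, dif_pos (show s < r by omega), dif_neg (show s ≠ 0 by omega)]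
    rw [Function.comp_apply, apply_edgeMap_mkE χ hf _ _ (hv _) hs (hvg _)]
    exact hgc _
  · have ht : type2Embedding v t g u ⟨r, hr⟩ = t := by
      simp only [type2Embedding, dif_neg (show r ≠ 0 by omega), dif_neg (lt_irrefl r), dif_pos]
    exact apply_edgeMap_mkE χ hf _ _ (hv _) ht hvt

lemma containsRich_of_star {χ : Edge n → C} {v t : Fin n} {c : C} {T U : Finset (Fin n)}
    (hT : r - 1 ≤ T.card) (hU : r - 2 ≤ U.card) (hvT : ∀ x ∈ T, v < x) (hTt : ∀ x ∈ T, x < t)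
    (htU : ∀ x ∈ U, t < x) (hTc : ∀ x ∈ T, ∀ h : v < x, χ ⟨(v, x), h⟩ = c) (hvt : v < t)
    (htc : χ ⟨(v, t), hvt⟩ ≠ c) :
    ContainsRich r χ := by
  set g := T.orderEmbOfCardLe hT
  set u := U.orderEmbOfCardLe hU
  have hgT : ∀ k, g k ∈ T := T.orderEmbOfCardLe_mem hT
  have huU : ∀ k, u k ∈ U := U.orderEmbOfCardLe_mem hU
  have hf : StrictMono (type2Embedding v t g u) :=
    type2Embedding_strictMono g.strictMono u.strictMono (fun k => hvT _ (hgT k))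
      (fun k => hTt _ (hgT k)) (fun k => htU _ (huU k)) hvt
  exact ⟨_, Or.inr (Or.inr (Or.inl (type2_comp_type2Embedding χ hf
    (fun k => hvT _ (hgT k)) (fun k => hTc _ (hgT k) _) hvt htc))), _, hf, fun _ => rfl⟩

end Type2

lemma exists_monochromatic_star {C : Type} [Fintype C] [DecidableEq C] {n k : ℕ}
    (χ : Edge n → C) {v : Fin n} {S : Finset (Fin n)} (hvS : ∀ x ∈ S, v < x)
    (hS : Fintype.card C * k < S.card) :
    ∃ c : C, ∃ T ⊆ S, k < T.card ∧ ∀ x ∈ T, ∀ h : v < x, χ ⟨(v, x), h⟩ = c := by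
  obtain ⟨c, -, hc⟩ := Finset.exists_lt_card_fiber_of_mul_lt_card_of_maps_to
    (s := S.attach) (f := fun x => χ ⟨(v, x), hvS x x.2⟩) (fun _ _ => Finset.mem_univ _)
    (by rwa [Finset.card_attach, Finset.card_univ])
  refine ⟨c, (S.attach.filter _).map (Function.Embedding.subtype _), fun x hx => ?_,
    by rwa [Finset.card_map], fun x hx _ => ?_⟩
  all_goals
    obtain ⟨y, hy, rfl⟩ := Finset.mem_map.mp hx
    rw [Finset.mem_filter] at hy
  · exact y.2
  · exact hy.2

theorem stmt_13 (l r n : ℕ) (χ : Edge n → Fin l) (v : Fin n)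
    (A : Finset (Fin n)) (hvA : ∀ a ∈ A, v < a)
    (B : Finset (Fin n))
    (hB : B = A.filter (fun x =>
      l * (r - 2) + 1 ≤ (A.filter (fun y => y < x)).card ∧
      l * (r - 2) + 1 ≤ (A.filter (fun y => x < y)).card))
    (hne : ¬ ∀ w ∈ B, ∀ w' ∈ B, ∀ (h1 : v < w) (h2 : v < w'),
        χ ⟨(v, w), h1⟩ = χ ⟨(v, w'), h2⟩) :
    ContainsRich r χ := by
  simp only [not_forall] at hne
  obtain ⟨w, hwB, w', hw'B, hvw, hvw', hww'⟩ := hne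
  rw [hB, Finset.mem_filter] at hwB hw'B
  have hl : 0 < l := (χ ⟨(v, w), hvw⟩).pos
  have hbelow : Fintype.card (Fin l) * (r - 2) < (A.filter (· < min w w')).card := by
    rw [Fintype.card_fin]
    rcases min_choice w w' with h | h <;> rw [h] <;> omega
  obtain ⟨c, T, hTA, hT, hTc⟩ := exists_monochromatic_star χ
    (fun x hx => hvA x (Finset.mem_filter.mp hx).1) hbelow
  have hstar : ∀ t (hvt : v < t), min w w' ≤ t →
      l * (r - 2) + 1 ≤ (A.filter (t < ·)).card → χ ⟨(v, t), hvt⟩ ≠ c → ContainsRich r χ :=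
    fun t hvt hmin habove htc => containsRich_of_star (U := A.filter (t < ·)) (by omega)
      (by have := Nat.le_mul_of_pos_left (r - 2) hl; omega)
      (fun x hx => hvA x (Finset.mem_filter.mp (hTA hx)).1)
      (fun x hx => ((Finset.mem_filter.mp (hTA hx)).2).trans_le hmin)
      (fun x hx => (Finset.mem_filter.mp hx).2) hTc hvt htc
  by_cases hwc : χ ⟨(v, w), hvw⟩ = c
  · exact hstar w' hvw' (min_le_right w w') hw'B.2.2 (hwc ▸ Ne.symm hww')
  · exact hstar w hvw (min_le_left w w') hwB.2.2 hwc
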